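/- arXiv:2407.15506 — 2 statements merged into one kernel-verified Lean document; each statement's English description precedes it below -/
import Mathlib

section
/- Let (W,S) be a 2-spherical Coxeter system whose Coxeter diagram is the complete graph. Let w ∈ W and r,s,t ∈ S pairwise distinct with ℓ(ws) = ℓ(w)+1 = ℓ(wt). If ℓ(wsr) = ℓ(w), then ℓ(wsrt) = ℓ(w)+1. -/
/-!
By Tits' theorem for the geometric representation `ρ` of `W` on `⊕ᵢ ℝ αᵢ`, `i` is a right
descent of `x` iff `ρ x αᵢ ≤ 0`. If `s, t` are right descents of `x` and `mₛₜ ≥ 3`, then `ρ x` is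
nonpositive on `αₛ, αₜ`, hence on `sₛ αₜ = αₜ + 2 cos (π / mₛₜ) αₛ` and on
`sₛ sₜ αₛ = (4 cos² (π / mₛₜ) - 1) αₛ + 2 cos (π / mₛₜ) αₜ`: so `t` is a right descent of `x sₛ`,
and `s` one of `x sₛ sₜ`. If moreover `r` were a right descent of `x sₛ`, then the shorter element
`x sₛ` would have right descents `t, r` while `x sₛ sₜ` has right descent `s`: the same situation
with `(r, s, t)` rotated to `(s, t, r)`, which is impossible by induction on the length. The
theorem is the case `x = w sₛ` with `r, s, t` permuted: `r` and `s` are right descents of `w sₛ`,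
so `t` is not one of `w sₛ sᵣ`.
-/

open Real Polynomial.Chebyshev Finsupp

namespace Polynomial.Chebyshev

lemma S_eval_two_mul_cos_eq_zero {θ : ℝ} (hθ : sin θ ≠ 0) {n : ℤ} (h : sin ((n + 1) * θ) = 0) :
    (S ℝ n).eval (2 * cos θ) = 0 := by
  have := S_two_mul_real_cos θ n
  rw [h] at this
  exact (mul_eq_zero.mp this).resolve_right hθ

lemma S_eval_two_mul_cos_add_S_eval_two_mul_cos_eq_zero {θ : ℝ} (hθ : sin θ ≠ 0) {n : ℤ}
    (h : sin ((n + 1 / 2) * θ) = 0) :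
    (S ℝ n).eval (2 * cos θ) + (S ℝ (n - 1)).eval (2 * cos θ) = 0 := by
  have key : ((S ℝ n).eval (2 * cos θ) + (S ℝ (n - 1)).eval (2 * cos θ)) * sin θ = 0 := by
    rw [add_mul, S_two_mul_real_cos, S_two_mul_real_cos, sin_add_sin]
    push_cast
    rw [show ((n + 1) * θ + (n - 1 + 1) * θ) / 2 = (n + 1 / 2) * θ by ring, h]
    ring
  exact (mul_eq_zero.mp key).resolve_right hθ

lemma S_eval_two_mul_cos_pi_div_nonneg {m : ℕ} (hm : 2 ≤ m) {n : ℤ} (hn : 0 ≤ n + 1)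
    (hnm : n + 1 ≤ m) : 0 ≤ (S ℝ n).eval (2 * cos (π / m)) := by
  have hm' : (0 : ℝ) < m := by positivity
  have hsin : 0 < sin (π / m) := by
    apply sin_pos_of_pos_of_lt_pi (by positivity)
    rw [div_lt_iff₀ hm']
    exact lt_mul_of_one_lt_right pi_pos (by exact_mod_cast hm)
  have key := S_two_mul_real_cos (π / m) n
  refine nonneg_of_mul_nonneg_left (key ▸ sin_nonneg_of_nonneg_of_le_pi ?_ ?_) hsin
  · have : (0 : ℝ) ≤ n + 1 := by exact_mod_cast hn
    positivity
  · have : ((n : ℝ) + 1) ≤ m := by exact_mod_cast hnm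
    calc ((n : ℝ) + 1) * (π / m) ≤ m * (π / m) := by gcongr
      _ = π := by field_simp

end Polynomial.Chebyshev

lemma one_le_two_mul_cos_pi_div {m : ℕ} (hm : 3 ≤ m) : 1 ≤ 2 * cos (π / m) := by
  have hm' : (3 : ℝ) ≤ m := by exact_mod_cast hm
  have h : π / m ≤ π / 3 := div_le_div_of_nonneg_left pi_pos.le (by norm_num) hm'
  have := cos_le_cos_of_nonneg_of_le_pi (by positivity) (by linarith [pi_pos]) h
  rw [cos_pi_div_three] at this
  linarith

namespace Module

variable {V : Type*} [AddCommGroup V] [Module ℝ V] {x y : V} {f g : Dual ℝ V}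

lemma reflection_mul_reflection_sq_eq_one (hf : f x = 2) (hg : g y = 2) (hfy : f y = 0)
    (hgx : g x = 0) : (reflection hf * reflection hg) ^ 2 = 1 := by
  apply LinearEquiv.toLinearMap_injective
  rw [reflection_mul_reflection_pow]
  ext v
  simp [hfy, hgx]
  module

lemma reflection_mul_reflection_pow_eq_one (hf : f x = 2) (hg : g y = 2) {m : ℕ} (hm : 3 ≤ m)
    (hfg : f y * g x = 4 * cos (π / m) ^ 2) : (reflection hf * reflection hg) ^ m = 1 := by
  have hθ : sin (2 * π / m) ≠ 0 := by
    have hm' : (3 : ℝ) ≤ m := by exact_mod_cast hm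
    refine (sin_pos_of_pos_of_lt_pi (by positivity) ?_).ne'
    rw [div_lt_iff₀ (by positivity)]
    nlinarith [pi_pos]
  have ht : 2 * cos (2 * π / m) = f y * g x - 2 := by
    rw [hfg, mul_div_assoc, cos_two_mul]
    ring
  apply LinearEquiv.toLinearMap_injective
  rw [reflection_mul_reflection_pow _ _ _ _ ht]
  obtain ⟨k, rfl | rfl⟩ := Nat.even_or_odd' m
  · have hS : (S ℝ (k - 1)).eval (2 * cos (2 * π / ↑(2 * k))) = 0 := by
      refine S_eval_two_mul_cos_eq_zero hθ ?_
      have hk0 : (k : ℝ) ≠ 0 := by norm_cast; omega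
      push_cast
      convert sin_pi using 2
      field_simp
      ring
    push_cast at hS ⊢
    rw [show (2 * (k : ℤ) - 2) / 2 = k - 1 by omega, show (2 * (k : ℤ) - 1) / 2 = k - 1 by omega]
    simp [hS]
  · have hS : (S ℝ k).eval (2 * cos (2 * π / ↑(2 * k + 1))) +
        (S ℝ (k - 1)).eval (2 * cos (2 * π / ↑(2 * k + 1))) = 0 := by
      refine S_eval_two_mul_cos_add_S_eval_two_mul_cos_eq_zero hθ ?_
      push_cast
      convert sin_pi using 2
      field_simp
    push_cast at hS ⊢
    rw [show (2 * (k : ℤ) + 1 - 2) / 2 = k - 1 by omega,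
      show (2 * (k : ℤ) + 1 - 1) / 2 = k by omega, show (2 * (k : ℤ) + 1 - 3) / 2 = k - 1 by omega,
      show (2 * (k : ℤ) + 1) / 2 = k by omega, hS]
    simp

end Module

namespace CoxeterMatrix

variable {B : Type*} (M : CoxeterMatrix B)

/-- `B(αᵢ, ·)` for the form with `B(αᵢ, αⱼ) = -cos (π / mᵢⱼ)`. At `M i j = 0` (that is,
`mᵢⱼ = ∞`) the junk value `π / 0 = 0` gives the correct `B(αᵢ, αⱼ) = -1`. -/
noncomputable def cosineForm (i : B) : Module.Dual ℝ (B →₀ ℝ) :=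
  linearCombination ℝ fun j => -cos (π / M i j)

lemma cosineForm_single (i j : B) : M.cosineForm i (single j 1) = -cos (π / M i j) := by
  simp [cosineForm]

lemma two_smul_cosineForm_single_self (i : B) : (2 • M.cosineForm i) (single i 1) = 2 := by
  simp [cosineForm_single]

noncomputable def simpleReflection (i : B) : (B →₀ ℝ) ≃ₗ[ℝ] (B →₀ ℝ) :=
  Module.reflection (M.two_smul_cosineForm_single_self i)

lemma simpleReflection_single (i j : B) :
    M.simpleReflection i (single j 1) = single j 1 + (2 * cos (π / M i j)) • single i 1 := by
  rw [simpleReflection, Module.reflection_apply, LinearMap.smul_apply, cosineForm_single]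
  module

lemma simpleReflection_single_self (i : B) : M.simpleReflection i (single i 1) = -single i 1 :=
  Module.reflection_apply_self _

lemma simpleReflection_mul_self (i : B) : M.simpleReflection i * M.simpleReflection i = 1 :=
  LinearEquiv.ext fun v => by
    rw [LinearEquiv.mul_apply]
    exact Module.involutive_reflection _ v

lemma isLiftable_simpleReflection : M.IsLiftable M.simpleReflection := by
  intro i j
  obtain rfl | hij := eq_or_ne i j
  · rw [M.diagonal, pow_one, simpleReflection_mul_self]
  obtain h0 | h2 | h3 : M i j = 0 ∨ M i j = 2 ∨ 3 ≤ M i j := by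
    have := M.off_diagonal i j hij; omega
  · rw [h0, pow_zero]
  · have hcos : cos (π / M j i) = 0 := by rw [M.symmetric, h2]; simp
    rw [h2]
    exact Module.reflection_mul_reflection_sq_eq_one _ _
      (by simp [cosineForm_single, h2]) (by simp [cosineForm_single, hcos])
  · refine Module.reflection_mul_reflection_pow_eq_one _ _ h3 ?_
    simp only [LinearMap.smul_apply, cosineForm_single, M.symmetric j i]
    ring

lemma cos_pi_div_nonneg {i j : B} (hij : i ≠ j) : 0 ≤ cos (π / M i j) := by
  obtain h0 | hne := eq_or_ne (M i j) 0
  · simp [h0]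
  · have hm : (2 : ℝ) ≤ M i j := by have := M.off_diagonal i j hij; norm_cast; omega
    apply cos_nonneg_of_neg_pi_div_two_le_of_le
    · linarith [show 0 ≤ π / M i j by positivity, pi_pos]
    · rw [div_le_div_iff_of_pos_left pi_pos (by positivity) two_pos]
      exact hm

lemma simpleReflection_simpleReflection_single (i j : B) :
    M.simpleReflection i (M.simpleReflection j (single i 1)) =
      ((2 * cos (π / M i j)) ^ 2 - 1) • single i 1 + (2 * cos (π / M i j)) • single j 1 := by
  rw [simpleReflection_single, map_add, map_smul, simpleReflection_single_self,
    simpleReflection_single, M.symmetric j i]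
  module

lemma S_eval_two_mul_cos_nonneg {i j : B} (hij : i ≠ j) {n : ℤ} (hn : 0 ≤ n + 1)
    (hnm : M i j = 0 ∨ n + 1 ≤ M i j) : 0 ≤ (S ℝ n).eval (2 * cos (π / M i j)) := by
  obtain h0 | hne := eq_or_ne (M i j) 0
  · simpa [h0, S_eval_two] using (by exact_mod_cast hn : (0 : ℝ) ≤ n + 1)
  · have := M.off_diagonal i j hij
    exact Polynomial.Chebyshev.S_eval_two_mul_cos_pi_div_nonneg (by omega) hn
      (hnm.resolve_left hne)

end CoxeterMatrix

namespace CoxeterSystem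

variable {B W : Type*} [Group W] {M : CoxeterMatrix B} (cs : CoxeterSystem M W)

noncomputable def geometricRepresentation : W →* (B →₀ ℝ) ≃ₗ[ℝ] (B →₀ ℝ) :=
  cs.lift ⟨M.simpleReflection, M.isLiftable_simpleReflection⟩

local notation "ρ" => cs.geometricRepresentation
local prefix:100 "ℓ" => cs.length

lemma geometricRepresentation_simple (i : B) : ρ (cs.simple i) = M.simpleReflection i :=
  cs.lift_apply_simple _ i

lemma geometricRepresentation_mul_simple_apply (x : W) (i : B) (γ : B →₀ ℝ) :
    ρ (x * cs.simple i) γ = ρ x (M.simpleReflection i γ) := by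
  rw [map_mul, LinearEquiv.mul_apply, geometricRepresentation_simple]

lemma geometricRepresentation_wordProd_alternatingWord_single (i j : B) (l : ℕ) :
    ρ (cs.wordProd (alternatingWord i j l)) (single i 1) =
      if Even l then
        (S ℝ l).eval (2 * cos (π / M i j)) • single i 1 +
          (S ℝ (l - 1)).eval (2 * cos (π / M i j)) • single j 1
      else
        (S ℝ (l - 1)).eval (2 * cos (π / M i j)) • single i 1 +
          (S ℝ l).eval (2 * cos (π / M i j)) • single j 1 := by
  induction l with
  | zero => simp [alternatingWord]
  | succ l ih =>
    have hS : (S ℝ (l + 1)).eval (2 * cos (π / M i j)) =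
        2 * cos (π / M i j) * (S ℝ l).eval (2 * cos (π / M i j)) -
          (S ℝ (l - 1)).eval (2 * cos (π / M i j)) := by
      simp [S_add_one]
    rw [alternatingWord_succ', wordProd_cons, map_mul, LinearEquiv.mul_apply, ih,
      geometricRepresentation_simple]
    by_cases hl : Even l
    · rw [if_pos hl, if_pos hl, if_neg (by simp [Nat.even_add_one, hl]), map_add, map_smul,
        map_smul, M.simpleReflection_single_self, M.simpleReflection_single, M.symmetric j i]
      push_cast
      rw [add_sub_cancel_right, hS]
      module
    · rw [if_neg hl, if_neg hl, if_pos (Nat.even_add_one.mpr hl), map_add, map_smul, map_smul,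
        M.simpleReflection_single_self, M.simpleReflection_single]
      push_cast
      rw [add_sub_cancel_right, hS]
      module

lemma wordProd_alternatingWord_succ_mul_simple (i j : B) (m : ℕ) :
    cs.wordProd (alternatingWord j i (m + 1)) * cs.simple i =
      cs.wordProd (alternatingWord i j m) := by
  rw [alternatingWord_succ, wordProd_concat, mul_assoc, simple_mul_simple_self, mul_one]

lemma length_mul_wordProd_alternatingWord_le (v : W) (i j : B) (m : ℕ) :
    ℓ (v * cs.wordProd (alternatingWord i j m)) ≤ ℓ v + m := by
  calc ℓ (v * cs.wordProd (alternatingWord i j m))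
      ≤ ℓ v + ℓ (cs.wordProd (alternatingWord i j m)) := cs.length_mul_le _ _
    _ ≤ ℓ v + m := by
      grw [cs.length_wordProd_le, length_alternatingWord]

lemma isRightDescent_mul_wordProd_alternatingWord_succ (v : W) (i j : B) (m : ℕ)
    (hlen : ℓ (v * cs.wordProd (alternatingWord j i (m + 1))) = ℓ v + (m + 1)) :
    cs.IsRightDescent (v * cs.wordProd (alternatingWord j i (m + 1))) i := by
  have := cs.length_mul_wordProd_alternatingWord_le v i j m
  rw [IsRightDescent, mul_assoc, wordProd_alternatingWord_succ_mul_simple]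
  omega

lemma exists_eq_mul_wordProd_alternatingWord (x : W) {i j : B} (hij : i ≠ j) :
    ∃ v m, (x = v * cs.wordProd (alternatingWord i j m) ∨
        x = v * cs.wordProd (alternatingWord j i m)) ∧
      ℓ x = ℓ v + m ∧ ¬ cs.IsRightDescent v i ∧ ¬ cs.IsRightDescent v j := by
  by_cases hdesc : cs.IsRightDescent x i ∨ cs.IsRightDescent x j
  swap
  · obtain ⟨hi, hj⟩ := not_or.mp hdesc
    exact ⟨x, 0, Or.inl (by simp [alternatingWord]), by simp, hi, hj⟩
  wlog hi : cs.IsRightDescent x i generalizing i j with H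
  · obtain ⟨v, m, hx, hlen, hvj, hvi⟩ := H hij.symm hdesc.symm (hdesc.resolve_left hi)
    exact ⟨v, m, hx.symm, hlen, hvi, hvj⟩
  have hyi : ¬ cs.IsRightDescent (x * cs.simple i) i :=
    cs.isRightDescent_iff_not_isRightDescent_mul.mp hi
  have hy : ℓ (x * cs.simple i) + 1 = ℓ x := cs.isRightDescent_iff.mp hi
  obtain ⟨v, m, hyv, hlen, hvi, hvj⟩ :=
    exists_eq_mul_wordProd_alternatingWord (x * cs.simple i) hij
  have hyv : x * cs.simple i = v * cs.wordProd (alternatingWord i j m) := by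
    obtain h | h := hyv
    · exact h
    cases m with
    | zero => simpa [alternatingWord] using h
    | succ m =>
      rw [h] at hlen hyi
      exact absurd (cs.isRightDescent_mul_wordProd_alternatingWord_succ v i j m hlen) hyi
  refine ⟨v, m + 1, Or.inr ?_, by omega, hvi, hvj⟩
  rw [← cs.simple_mul_simple_cancel_right (w := x) (i := i), hyv, alternatingWord_succ,
    wordProd_concat, mul_assoc]
termination_by cs.length x
decreasing_by all_goals exact hi

lemma eq_zero_or_lt_of_eq_mul_wordProd_alternatingWord {x v : W} {i j : B} {m : ℕ}
    (hx : x = v * cs.wordProd (alternatingWord i j m)) (hlen : ℓ x = ℓ v + m)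
    (hi : ¬ cs.IsRightDescent x i) : M i j = 0 ∨ m < M i j := by
  by_contra! h
  obtain ⟨h0, hle⟩ := h
  obtain hlt | rfl := hle.lt_or_eq
  · have hred := cs.not_isReduced_alternatingWord i j h0 hlt
    have hw := cs.length_wordProd_le (alternatingWord i j m)
    have hmul := cs.length_mul_le v (cs.wordProd (alternatingWord i j m))
    rw [IsReduced, length_alternatingWord] at hred
    rw [length_alternatingWord] at hw
    rw [← hx] at hmul
    omega
  · have heq := cs.prod_alternatingWord_eq_prod_alternatingWord_sub i j (M i j) (by omega)
    rw [show M i j * 2 - M i j = M i j by omega] at heq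
    obtain ⟨k, hk⟩ := Nat.exists_eq_succ_of_ne_zero h0
    rw [heq, hk] at hx
    rw [hk, hx] at hlen
    exact hi (hx ▸ cs.isRightDescent_mul_wordProd_alternatingWord_succ v i j k hlen)

lemma geometricRepresentation_mul_wordProd_alternatingWord_single_nonneg {v : W} {i j : B}
    (hij : i ≠ j) {m : ℕ} (hm : M i j = 0 ∨ m < M i j) (hvi : 0 ≤ ρ v (single i 1))
    (hvj : 0 ≤ ρ v (single j 1)) :
    0 ≤ ρ (v * cs.wordProd (alternatingWord i j m)) (single i 1) := by
  have hS (n : ℤ) (h₀ : 0 ≤ n + 1) (h₁ : n ≤ m) : 0 ≤ (S ℝ n).eval (2 * cos (π / M i j)) :=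
    M.S_eval_two_mul_cos_nonneg hij h₀ (hm.imp_right fun h => by omega)
  have hSm := hS m (by omega) le_rfl
  have hSm' := hS (m - 1) (by omega) (by omega)
  rw [map_mul, LinearEquiv.mul_apply, geometricRepresentation_wordProd_alternatingWord_single]
  split_ifs <;> rw [map_add, map_smul, map_smul]
  · exact add_nonneg (smul_nonneg hSm hvi) (smul_nonneg hSm' hvj)
  · exact add_nonneg (smul_nonneg hSm' hvi) (smul_nonneg hSm hvj)

theorem geometricRepresentation_single_nonneg {x : W} {i : B} (hi : ¬ cs.IsRightDescent x i) :
    0 ≤ ρ x (single i 1) := by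
  obtain rfl | hx1 := eq_or_ne x 1
  · simp
  obtain ⟨j, hj⟩ := cs.exists_rightDescent_of_ne_one hx1
  have hij : i ≠ j := by rintro rfl; exact hi hj
  obtain ⟨v, m, hx, hlen, hvi, hvj⟩ := cs.exists_eq_mul_wordProd_alternatingWord x hij
  cases m with
  | zero =>
    have : x = v := by simpa [alternatingWord] using hx
    exact absurd (this ▸ hj) hvj
  | succ m =>
    obtain hx | hx := hx
    · rw [hx]
      exact cs.geometricRepresentation_mul_wordProd_alternatingWord_single_nonneg hij
        (cs.eq_zero_or_lt_of_eq_mul_wordProd_alternatingWord hx hlen hi)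
        (geometricRepresentation_single_nonneg hvi) (geometricRepresentation_single_nonneg hvj)
    · rw [hx] at hlen hi
      exact absurd (cs.isRightDescent_mul_wordProd_alternatingWord_succ v i j m hlen) hi
termination_by cs.length x
decreasing_by all_goals omega

theorem geometricRepresentation_single_nonpos {x : W} {i : B} (hi : cs.IsRightDescent x i) :
    ρ x (single i 1) ≤ 0 := by
  have := cs.geometricRepresentation_single_nonneg
    (cs.isRightDescent_iff_not_isRightDescent_mul.mp hi)
  rwa [geometricRepresentation_mul_simple_apply, M.simpleReflection_single_self, map_neg,
    neg_nonneg] at this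

theorem isRightDescent_iff_geometricRepresentation_single_nonpos {x : W} {i : B} :
    cs.IsRightDescent x i ↔ ρ x (single i 1) ≤ 0 := by
  refine ⟨cs.geometricRepresentation_single_nonpos, fun h => ?_⟩
  by_contra hi
  have := le_antisymm h (cs.geometricRepresentation_single_nonneg hi)
  simp at this

variable {cs}

theorem IsRightDescent.mul_simple {x : W} {i j : B} (hi : cs.IsRightDescent x i)
    (hj : cs.IsRightDescent x j) (hij : i ≠ j) : cs.IsRightDescent (x * cs.simple i) j := by
  rw [isRightDescent_iff_geometricRepresentation_single_nonpos] at hi hj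
  rw [isRightDescent_iff_geometricRepresentation_single_nonpos,
    geometricRepresentation_mul_simple_apply, M.simpleReflection_single, map_add, map_smul]
  have := M.cos_pi_div_nonneg hij
  exact add_nonpos hj (smul_nonpos_of_nonneg_of_nonpos (by positivity) hi)

theorem IsRightDescent.mul_simple_mul_simple {x : W} {i j : B} (hi : cs.IsRightDescent x i)
    (hj : cs.IsRightDescent x j) (hij : 3 ≤ M i j) :
    cs.IsRightDescent (x * cs.simple i * cs.simple j) i := by
  rw [isRightDescent_iff_geometricRepresentation_single_nonpos] at hi hj
  rw [isRightDescent_iff_geometricRepresentation_single_nonpos,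
    geometricRepresentation_mul_simple_apply, geometricRepresentation_mul_simple_apply,
    M.simpleReflection_simpleReflection_single, map_add, map_smul, map_smul]
  have := one_le_two_mul_cos_pi_div hij
  exact add_nonpos (smul_nonpos_of_nonneg_of_nonpos (by nlinarith) hi)
    (smul_nonpos_of_nonneg_of_nonpos (by linarith) hj)

theorem IsRightDescent.not_isRightDescent_mul_simple (hM : ∀ i j : B, i ≠ j → 3 ≤ M i j)
    {x : W} {r s t : B} (hs : cs.IsRightDescent x s) (ht : cs.IsRightDescent x t) (hrs : r ≠ s)
    (hrt : r ≠ t) (hst : s ≠ t) : ¬ cs.IsRightDescent (x * cs.simple s) r := fun hr =>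
  IsRightDescent.not_isRightDescent_mul_simple hM (hs.mul_simple ht hst) hr hst hrs.symm hrt.symm
    (hs.mul_simple_mul_simple ht (hM s t hst))
termination_by cs.length x
decreasing_by exact hs

end CoxeterSystem

theorem stmt13_general {B W : Type*} [Group W] {M : CoxeterMatrix B} (cs : CoxeterSystem M W)
    (hM : ∀ p q : B, p ≠ q → 3 ≤ M.M p q ∧ M.M p q ≠ 0)
    (w : W) (r s t : B) (hrs : r ≠ s) (hrt : r ≠ t) (hst : s ≠ t)
    (hs : cs.length (w * cs.simple s) = cs.length w + 1)
    (hsr : cs.length (w * cs.simple s * cs.simple r) = cs.length w) :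
    cs.length (w * cs.simple s * cs.simple r * cs.simple t) = cs.length w + 1 := by
  have hr : cs.IsRightDescent (w * cs.simple s) r := by
    rw [CoxeterSystem.IsRightDescent, hsr, hs]; omega
  have hs' : cs.IsRightDescent (w * cs.simple s) s := by
    rw [CoxeterSystem.IsRightDescent, CoxeterSystem.simple_mul_simple_cancel_right, hs]; omega
  have ht : ¬ cs.IsRightDescent (w * cs.simple s * cs.simple r) t :=
    hr.not_isRightDescent_mul_simple (fun i j h => (hM i j h).1) hs' hrt.symm hst.symm hrs
  rwa [CoxeterSystem.not_isRightDescent_iff, hsr] at ht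

/-- In a 2-spherical Coxeter system whose Coxeter diagram is the
complete graph (`3 ≤ m_{pq} < ∞` for all `p ≠ q`): if `r, s, t` are pairwise distinct,
`ℓ(ws) = ℓ(w)+1 = ℓ(wt)` and `ℓ(wsr) = ℓ(w)`, then `ℓ(wsrt) = ℓ(w)+1`. -/
theorem stmt13 {B W : Type*} [Group W] {M : CoxeterMatrix B} (cs : CoxeterSystem M W)
    (hM : ∀ p q : B, p ≠ q → 3 ≤ M.M p q ∧ M.M p q ≠ 0)
    (w : W) (r s t : B) (hrs : r ≠ s) (hrt : r ≠ t) (hst : s ≠ t)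
    (hs : cs.length (w * cs.simple s) = cs.length w + 1)
    (ht : cs.length (w * cs.simple t) = cs.length w + 1)
    (hsr : cs.length (w * cs.simple s * cs.simple r) = cs.length w) :
    cs.length (w * cs.simple s * cs.simple r * cs.simple t) = cs.length w + 1 :=
  stmt13_general cs hM w r s t hrs hrt hst hs hsr
end

section
/- Let (W,S) be a Coxeter system, R a spherical rank-2 residue of Σ(W,S) and α a root. Then exactly one of the following holds: R ⊆ α, R ⊆ −α, or R is stabilized by the reflection r_α. -/
variable {B W : Type*} [Group W] {M : CoxeterMatrix B}

/-- The simple root `α_s = {w ∈ W : ℓ(sw) > ℓ(w)}`, viewed as a half-space of chambers. -/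
def simpleRoot (cs : CoxeterSystem M W) (s : B) : Set W :=
  {w : W | cs.length w < cs.length (cs.simple s * w)}

/-- `α` is a root (half-space) with associated reflection `r`: `α = v • α_s` and
`r = v s v⁻¹` for some `v ∈ W`, `s ∈ S`.  The opposite root `-α` is the complement `αᶜ`. -/
def IsRootPair (cs : CoxeterSystem M W) (α : Set W) (r : W) : Prop :=
  ∃ (v : W) (s : B), α = (v * ·) '' simpleRoot cs s ∧ r = v * cs.simple s * v⁻¹

/-- A spherical rank-2 residue of the chamber system `Σ(W,S)`: a coset `c⟨s,t⟩` with
`s ≠ t` and `⟨s,t⟩` finite. -/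
def IsSphRank2Residue (cs : CoxeterSystem M W) (R : Set W) : Prop :=
  ∃ (c : W) (s t : B), s ≠ t ∧
    (Subgroup.closure {cs.simple s, cs.simple t} : Set W).Finite ∧
    R = (c * ·) '' (Subgroup.closure {cs.simple s, cs.simple t} : Set W)

/-- `∂²α`: the spherical rank-2 residues stabilized by the reflection `r = r_α`. -/
def res2 (cs : CoxeterSystem M W) (r : W) : Set (Set W) :=
  {R | IsSphRank2Residue cs R ∧ (r * ·) '' R = R}

/-!
A root `α = v • α_s` is the half-space bounded by the wall of `r = v s v⁻¹`, and `r` swaps `α`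
with `-α`; so if `r` stabilizes `R`, then `R` meets both `α` and `-α`. Conversely, if `R` meets
both sides, a gallery inside `R` crosses the wall between adjacent chambers `u ∈ α` and
`u s_j ∉ α`, where `s_j` generates the residue. The only wall between `u` and `u s_j` is that of
`u s_j u⁻¹`, so `r = u s_j u⁻¹` lies in the conjugate `c ⟨J⟩ c⁻¹` and stabilizes `R = c ⟨J⟩`.

That last fact is a form of the exchange condition. It comes from Tits' sign representation
of `W` on pairs (reflection, sign), whose sign records the parity of the number of times a
word crosses a wall; it is well defined because the left inversion sequence of the word
`(i i')^(m i i')` is periodic with period `m i i'`.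
-/

namespace CoxeterSystem

open List

variable (cs : CoxeterSystem M W)

local prefix:100 "s " => cs.simple
local prefix:100 "π " => cs.wordProd
local prefix:100 "lis " => cs.leftInvSeq

theorem prod_map_alternatingWord_two_mul {G : Type*} [Monoid G] (f : B → G) (i i' : B) (m : ℕ) :
    ((alternatingWord i i' (2 * m)).map f).prod = (f i * f i') ^ m := by
  induction m with
  | zero => simp [alternatingWord]
  | succ m ih =>
    have hodd : ¬ Even (2 * m + 1) := by simp [parity_simps]
    rw [mul_add_one, alternatingWord_succ', alternatingWord_succ', if_neg hodd,
      if_pos (even_two_mul m), map_cons, map_cons, prod_cons, prod_cons, ih, pow_succ', mul_assoc]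

theorem leftInvSeq_alternatingWord_two_mul (i i' : B) (m : ℕ) :
    lis (alternatingWord i i' (2 * m)) = (range (2 * m)).map fun k ↦ s i * (s i' * s i) ^ k := by
  apply ext_getElem (by simp)
  intro k hk _
  simp only [getElem_leftInvSeq_alternatingWord cs i i' m k (by simpa using hk),
    prod_alternatingWord_eq_mul_pow, getElem_map, getElem_range]
  simp [parity_simps, Nat.mul_add_div]

open scoped Classical in
theorem even_count_leftInvSeq_braid (i i' : B) (t : W) :
    Even ((lis (alternatingWord i i' (2 * M i i'))).count t) := by
  have hperiod : ∀ k, s i * (s i' * s i) ^ (M i i' + k) = s i * (s i' * s i) ^ k := by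
    intro k
    rw [pow_add, M.symmetric, cs.simple_mul_simple_pow, one_mul]
  rw [leftInvSeq_alternatingWord_two_mul, two_mul, range_add, map_append, map_map]
  simp only [Function.comp_def, hperiod, count_append]
  exact ⟨_, rfl⟩

open scoped Classical in
noncomputable def titsPerm (i : B) : Equiv.Perm (W × ℤˣ) :=
  Function.Involutive.toPerm (fun p ↦ (s i * p.1 * s i, if p.1 = s i then -p.2 else p.2)) <| by
    rintro ⟨t, e⟩
    have hconj : s i * t * s i = s i ↔ t = s i := by
      rw [mul_eq_right, mul_eq_one_iff_eq_inv', inv_simple]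
    refine Prod.ext (by simp [mul_assoc]) ?_
    by_cases ht : t = s i <;> simp [hconj, ht]

open scoped Classical in
theorem titsPerm_apply (i : B) (t : W) (e : ℤˣ) :
    cs.titsPerm i (t, e) = (s i * t * s i, if t = s i then -e else e) := rfl

open scoped Classical in
theorem prod_map_titsPerm (ω : List B) (t : W) (e : ℤˣ) :
    (ω.map cs.titsPerm).prod (t, e) =
      (π ω * t * (π ω)⁻¹, (-1) ^ (lis ω).count (π ω * t * (π ω)⁻¹) * e) := by
  induction ω using List.reverseRecOn generalizing t e with
  | nil => simp
  | append_singleton ω i ih =>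
    have hπ : π (ω ++ [i]) = π ω * s i := by rw [wordProd_append, wordProd_singleton]
    have hlis : lis (ω ++ [i]) = lis ω ++ [π ω * s i * (π ω)⁻¹] := by
      rw [← concat_eq_append, leftInvSeq_concat, concat_eq_append]
    have hconj : π ω * s i * (π ω)⁻¹ = π ω * (s i * t * s i) * (π ω)⁻¹ ↔ t = s i := by
      rw [mul_left_inj, mul_right_inj, eq_comm, mul_eq_right, mul_eq_one_iff_eq_inv', inv_simple]
    have hassoc : π ω * s i * t * (π ω * s i)⁻¹ = π ω * (s i * t * s i) * (π ω)⁻¹ := by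
      rw [mul_inv_rev, inv_simple]; group
    rw [map_append, prod_append, map_singleton, prod_singleton, Equiv.Perm.mul_apply,
      titsPerm_apply, ih, hπ, hlis, hassoc, count_append, count_singleton', hconj, pow_add]
    congr 1
    by_cases ht : t = s i <;> simp [ht]

theorem isLiftable_titsPerm : M.IsLiftable cs.titsPerm := by
  intro i i'
  ext ⟨t, e⟩ : 1
  have hπ : π (alternatingWord i i' (2 * M i i')) = 1 := by
    rw [wordProd, prod_map_alternatingWord_two_mul, simple_mul_simple_pow]
  rw [← prod_map_alternatingWord_two_mul, prod_map_titsPerm, hπ,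
    (cs.even_count_leftInvSeq_braid i i' _).neg_one_pow]
  simp

noncomputable def titsRep : W →* Equiv.Perm (W × ℤˣ) :=
  cs.lift ⟨cs.titsPerm, cs.isLiftable_titsPerm⟩

theorem titsRep_wordProd (ω : List B) : cs.titsRep (π ω) = (ω.map cs.titsPerm).prod := by
  rw [wordProd, map_list_prod, map_map]
  congr 1
  exact map_congr_left fun i _ ↦ cs.lift_apply_simple cs.isLiftable_titsPerm i

noncomputable def wallSign (w t : W) : ℤˣ := (cs.titsRep w (w⁻¹ * t * w, 1)).2

open scoped Classical in
theorem wallSign_wordProd (ω : List B) (t : W) :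
    cs.wallSign (π ω) t = (-1) ^ (lis ω).count t := by
  simp [wallSign, titsRep_wordProd, prod_map_titsPerm, mul_assoc]

theorem titsRep_apply (w t : W) (e : ℤˣ) :
    cs.titsRep w (t, e) = (w * t * w⁻¹, cs.wallSign w (w * t * w⁻¹) * e) := by
  obtain ⟨ω, rfl⟩ := cs.wordProd_surjective w
  rw [titsRep_wordProd, prod_map_titsPerm, wallSign_wordProd]

theorem wallSign_mul (w w' t : W) :
    cs.wallSign (w * w') t = cs.wallSign w t * cs.wallSign w' (w⁻¹ * t * w) := by
  rw [wallSign, map_mul, Equiv.Perm.mul_apply, titsRep_apply cs w', titsRep_apply cs w]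
  simp only [mul_one]
  congr 2 <;> group

theorem wallSign_one (t : W) : cs.wallSign 1 t = 1 := by
  simp [wallSign]

open scoped Classical in
theorem wallSign_simple (i : B) (t : W) : cs.wallSign (s i) t = if t = s i then -1 else 1 := by
  have := cs.wallSign_wordProd [i] t
  rw [wordProd_singleton, leftInvSeq_singleton, count_singleton'] at this
  rw [this]
  by_cases h : t = s i
  · simp [h]
  · simp [h, Ne.symm h]

theorem wallSign_self {t : W} (ht : cs.IsReflection t) : cs.wallSign t t = -1 := by
  obtain ⟨u, i, rfl⟩ := ht
  set t := u * s i * u⁻¹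
  have hconj : u⁻¹ * t * u = s i := by simp only [t]; group
  have hconj' : (u * s i)⁻¹ * t * (u * s i) = s i := by
    rw [mul_inv_rev, inv_simple,
      show s i * u⁻¹ * t * (u * s i) = s i * (u⁻¹ * t * u) * s i by group, hconj,
      simple_mul_simple_cancel_right]
  have hcancel : cs.wallSign u t * cs.wallSign u⁻¹ (s i) = 1 := by
    rw [← hconj, ← wallSign_mul, mul_inv_cancel, wallSign_one]
  calc cs.wallSign (u * s i * u⁻¹) t
      = cs.wallSign u t * cs.wallSign (s i) (s i) * cs.wallSign u⁻¹ (s i) := by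
        rw [wallSign_mul, wallSign_mul, hconj, hconj']
    _ = -1 := by
        rw [wallSign_simple, if_pos rfl, mul_right_comm, hcancel, one_mul]

open scoped Classical in
theorem IsReduced.wallSign_wordProd {ω : List B} (hω : cs.IsReduced ω) (t : W) :
    cs.wallSign (π ω) t = if t ∈ lis ω then -1 else 1 := by
  rw [cs.wallSign_wordProd, (hω.nodup_leftInvSeq cs).count]
  split_ifs <;> simp

theorem isLeftInversion_of_wallSign_eq_neg_one {w t : W}
    (h : cs.wallSign w t = -1) : cs.IsLeftInversion w t := by
  classical
  obtain ⟨ω, hω, rfl⟩ := cs.exists_isReduced w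
  rw [hω.wallSign_wordProd] at h
  by_cases hmem : t ∈ lis ω
  · exact cs.isLeftInversion_of_mem_leftInvSeq hω hmem
  · simp [hmem] at h

theorem wallSign_eq_neg_one_iff {w t : W} (ht : cs.IsReflection t) :
    cs.wallSign w t = -1 ↔ cs.IsLeftInversion w t := by
  refine ⟨cs.isLeftInversion_of_wallSign_eq_neg_one, fun hinv ↦ ?_⟩
  by_contra hne
  -- left multiplication by `t` flips the side of its own wall
  have hflip : cs.wallSign (t * w) t = -1 := by
    rw [wallSign_mul, wallSign_self cs ht, ht.inv, ht.mul_self, one_mul,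
      (Int.units_eq_one_or _).resolve_right hne, mul_one]
  have := (cs.isLeftInversion_of_wallSign_eq_neg_one hflip).2
  rw [← mul_assoc, ht.mul_self, one_mul] at this
  exact absurd hinv.2 (by omega)

theorem eq_conj_of_isLeftInversion_mul_simple {x t : W} {j : B}
    (h₁ : ¬ cs.IsLeftInversion x t) (h₂ : cs.IsLeftInversion (x * s j) t) :
    t = x * s j * x⁻¹ := by
  classical
  have hx : cs.wallSign x t = 1 :=
    (Int.units_eq_one_or _).resolve_right fun h ↦ h₁ ((cs.wallSign_eq_neg_one_iff h₂.1).1 h)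
  have hxj := (cs.wallSign_eq_neg_one_iff h₂.1).2 h₂
  rw [wallSign_mul, hx, one_mul, wallSign_simple] at hxj
  have hconj : x⁻¹ * t * x = s j := by
    by_contra h
    simp [h] at hxj
  rw [← hconj]
  group

end CoxeterSystem

theorem exists_mem_mul_notMem_of_mem_closure {G : Type*} [Group G] {S α : Set G} {x y : G}
    (hxy : x⁻¹ * y ∈ Subgroup.closure S) (hx : x ∈ α) (hy : y ∉ α) :
    ∃ u, x⁻¹ * u ∈ Subgroup.closure S ∧ u ∈ α ∧ ∃ z ∈ S, u * z ∉ α ∨ u * z⁻¹ ∉ α := by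
  by_contra! hclosed
  have hall : ∀ g ∈ Subgroup.closure S, x * g ∈ α := by
    intro g hg
    induction hg using Subgroup.closure_induction_right with
    | one => simpa using hx
    | mul_right g hg z hz ih =>
      simpa [mul_assoc] using (hclosed (x * g) (by simpa using hg) ih z hz).1
    | mul_inv_cancel g hg z hz ih =>
      simpa [mul_assoc] using (hclosed (x * g) (by simpa using hg) ih z hz).2
  exact hy (by simpa using hall _ hxy)

theorem image_mul_left_coset_of_conj_mem {G : Type*} [Group G] {H : Subgroup G} {c r : G}
    (h : c⁻¹ * r * c ∈ H) : (r * ·) '' ((c * ·) '' (H : Set G)) = (c * ·) '' H := by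
  ext x
  simp only [Set.image_mul_left, Set.mem_preimage, SetLike.mem_coe]
  rw [show c⁻¹ * (r⁻¹ * x) = (c⁻¹ * r * c)⁻¹ * (c⁻¹ * x) by group,
    H.mul_mem_cancel_left (H.inv_mem h)]

theorem mem_image_mul_simpleRoot_iff (cs : CoxeterSystem M W) (v w : W) (i : B) :
    w ∈ (v * ·) '' simpleRoot cs i ↔ ¬ cs.IsLeftDescent (v⁻¹ * w) i := by
  rw [Set.image_mul_left, Set.mem_preimage, simpleRoot, Set.mem_ofPred_eq,
    cs.not_isLeftDescent_iff]
  have := cs.length_simple_mul (v⁻¹ * w) i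
  omega

namespace IsRootPair

variable {cs : CoxeterSystem M W} {α : Set W} {r : W}

theorem notMem_iff_mul_mem (hα : IsRootPair cs α r) (w : W) : w ∉ α ↔ r * w ∈ α := by
  obtain ⟨v, i, rfl, rfl⟩ := hα
  rw [mem_image_mul_simpleRoot_iff, mem_image_mul_simpleRoot_iff, not_not,
    cs.isLeftDescent_iff_not_isLeftDescent_mul]
  group

theorem eq_conj_of_mem_of_mul_simple_notMem (hα : IsRootPair cs α r) {u : W} {j : B}
    (hu : u ∈ α) (huj : u * cs.simple j ∉ α) : r = u * cs.simple j * u⁻¹ := by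
  obtain ⟨v, i, rfl, rfl⟩ := hα
  rw [mem_image_mul_simpleRoot_iff, ← cs.isLeftInversion_simple_iff_isLeftDescent] at hu huj
  rw [not_not, ← mul_assoc] at huj
  rw [cs.eq_conj_of_isLeftInversion_mul_simple hu huj]
  group

theorem not_subset_of_mem_of_mul_mem (hα : IsRootPair cs α r) {R : Set W} {w : W}
    (hw : w ∈ R) (hrw : r * w ∈ R) : ¬ R ⊆ α ∧ ¬ R ⊆ αᶜ :=
  ⟨fun h ↦ (hα.notMem_iff_mul_mem w).2 (h hrw) (h hw),
    fun h ↦ h hrw ((hα.notMem_iff_mul_mem w).1 (h hw))⟩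

theorem image_mul_residue_eq (hα : IsRootPair cs α r) {J : Set B} {c : W}
    (h₁ : ¬ (c * ·) '' (Subgroup.closure (cs.simple '' J) : Set W) ⊆ α)
    (h₂ : ¬ (c * ·) '' (Subgroup.closure (cs.simple '' J) : Set W) ⊆ αᶜ) :
    (r * ·) '' ((c * ·) '' (Subgroup.closure (cs.simple '' J) : Set W)) =
      (c * ·) '' (Subgroup.closure (cs.simple '' J)) := by
  set H := Subgroup.closure (cs.simple '' J)
  obtain ⟨_, ⟨g, hg, rfl⟩, hy⟩ := Set.not_subset.1 h₁
  obtain ⟨_, ⟨h, hh, rfl⟩, hx⟩ := Set.not_subset.1 h₂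
  rw [Set.notMem_compl_iff] at hx
  obtain ⟨u, hu, huα, _, ⟨j, hj, rfl⟩, hcross⟩ := exists_mem_mul_notMem_of_mem_closure
    (by simpa [mul_assoc] using H.mul_mem (H.inv_mem hh) hg) hx hy
  rw [cs.inv_simple, or_self] at hcross
  apply image_mul_left_coset_of_conj_mem
  rw [hα.eq_conj_of_mem_of_mul_simple_notMem huα hcross,
    show c⁻¹ * (u * cs.simple j * u⁻¹) * c = (c⁻¹ * u) * cs.simple j * (c⁻¹ * u)⁻¹ by group]
  have hcu : c⁻¹ * u ∈ H := by simpa [mul_assoc] using H.mul_mem hh hu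
  exact H.mul_mem (H.mul_mem hcu (Subgroup.subset_closure ⟨j, hj, rfl⟩)) (H.inv_mem hcu)

end IsRootPair

/-- For a spherical rank-2 residue `R` and a root `α` with reflection
`r_α`, exactly one of the following holds: `R ⊆ α`, `R ⊆ -α`, or `R` is stabilized by
`r_α`. -/
theorem stmt15 (cs : CoxeterSystem M W) (R : Set W) (hres : IsSphRank2Residue cs R)
    (α : Set W) (r : W) (hα : IsRootPair cs α r) :
    (R ⊆ α ∧ ¬ R ⊆ αᶜ ∧ ¬ (r * ·) '' R = R) ∨
    (¬ R ⊆ α ∧ R ⊆ αᶜ ∧ ¬ (r * ·) '' R = R) ∨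
    (¬ R ⊆ α ∧ ¬ R ⊆ αᶜ ∧ (r * ·) '' R = R) := by
  obtain ⟨c, a, b, -, -, hR⟩ := hres
  have hc : c ∈ R := hR ▸ ⟨1, Subgroup.one_mem _, mul_one c⟩
  have hstab : (r * ·) '' R = R → ¬ R ⊆ α ∧ ¬ R ⊆ αᶜ :=
    fun h ↦ hα.not_subset_of_mem_of_mul_mem hc (h ▸ ⟨c, hc, rfl⟩)
  have hcross : ¬ R ⊆ α → ¬ R ⊆ αᶜ → (r * ·) '' R = R := by
    rw [hR, ← Set.image_pair]
    exact hα.image_mul_residue_eq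
  have hdisj : ¬ (R ⊆ α ∧ R ⊆ αᶜ) := fun h ↦ h.2 hc (h.1 hc)
  tauto
end
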